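/- Let (X, 𝓑, μ, f) be a dissipative system of bounded distortion generated by W, with f bijective and both f and f⁻¹ satisfying condition (⋆), and let 1 ≤ p < ∞. If condition 𝓗𝓓 holds, i.e. liminf_{n→∞} inf_{k∈ℤ} (μ(f^k(W))/μ(f^{k+n}(W)))^{1/n} > 1, then the composition operator T_f on L^p(X, μ) is a dilation, i.e. its inverse T_f⁻¹ = T_{f⁻¹} has spectral radius strictly less than 1. -/

import Mathlib

open MeasureTheory Filter Set Function Topology ENNReal

noncomputable section

namespace GHShadow

/-- The shadowing property for an invertible bounded linear operator. -/
def HasShadowing {E : Type*} [NormedAddCommGroup E] [NormedSpace ℝ E]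
    (T : E ≃L[ℝ] E) : Prop :=
  ∀ ε : ℝ, 0 < ε → ∃ δ : ℝ, 0 < δ ∧ ∀ x : ℤ → E,
    (∀ n : ℤ, ‖T (x n) - x (n + 1)‖ ≤ δ) →
      ∃ y : E, ∀ n : ℤ, ‖(T ^ n) y - x n‖ < ε

/-- `lim ‖Tⁿ‖^{1/n}` exists and is `< 1`. -/
def SpectralRadiusLtOne {E : Type*} [NormedAddCommGroup E] [NormedSpace ℝ E]
    (T : E →L[ℝ] E) : Prop :=
  ∃ r : ℝ, r < 1 ∧ Tendsto (fun n : ℕ => ‖T ^ n‖ ^ (1 / (n : ℝ))) atTop (nhds r)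

/-- The restriction of `T` to `M` has spectral radius `< 1`
(equivalently, is a proper contraction in an equivalent norm). -/
def ContractsOn {E : Type*} [NormedAddCommGroup E] [NormedSpace ℝ E]
    (T : E ≃L[ℝ] E) (M : Submodule ℝ E) : Prop :=
  ∃ C : ℝ, 0 < C ∧ ∃ t : ℝ, 0 < t ∧ t < 1 ∧
    ∀ n : ℕ, ∀ x ∈ M, ‖(T ^ n) x‖ ≤ C * t ^ n * ‖x‖

def GeneralizedHyperbolic {E : Type*} [NormedAddCommGroup E] [NormedSpace ℝ E]
    (T : E ≃L[ℝ] E) : Prop :=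
  ∃ M N : Submodule ℝ E, IsClosed (M : Set E) ∧ IsClosed (N : Set E) ∧
    IsCompl M N ∧ (∀ x ∈ M, T x ∈ M) ∧ (∀ x ∈ N, T.symm x ∈ N) ∧
    ContractsOn T M ∧ ContractsOn T.symm N

variable {X : Type*} [MeasurableSpace X]

/-- image of `B` under the `k`-th iterate of the invertible map `f`. -/
def img (f : Equiv.Perm X) (k : ℤ) (B : Set X) : Set X := ⇑(f ^ k) '' B

/-- `(X, 𝓑, μ, f)` is a dissipative system generated by `W`. -/
structure IsDissipative (μ : Measure X) (f : Equiv.Perm X) (W : Set X) : Prop where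
  sigmaFin : SigmaFinite μ
  meas_f : Measurable f
  meas_symm : Measurable f.symm
  meas_W : MeasurableSet W
  pos : 0 < μ W
  fin : μ W < ⊤
  disj : Pairwise fun k l : ℤ => Disjoint (img f k W) (img f l W)
  cover : (⋃ k : ℤ, img f k W) = univ

/-- `f` is of bounded distortion on `W` with constant `K`. -/
def BoundedDistortion (μ : Measure X) (f : Equiv.Perm X) (W : Set X) (K : ℝ≥0∞) : Prop :=
  ∀ k : ℤ, ∀ B : Set X, MeasurableSet B → B ⊆ W →
    (1 / K) * (μ (img f k W) * μ B) ≤ μ (img f k B) * μ W ∧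
      μ (img f k B) * μ W ≤ K * (μ (img f k W) * μ B)

/-- condition (⋆) for a transformation `g`. -/
def CondStar (μ : Measure X) (g : X → X) : Prop :=
  ∃ c : ℝ≥0∞, 0 < c ∧ c ≠ ⊤ ∧ ∀ B : Set X, MeasurableSet B → μ (g ⁻¹' B) ≤ c * μ B

/-- condition 𝓗𝓒. -/
def CondHC (μ : Measure X) (f : Equiv.Perm X) (W : Set X) : Prop :=
  limsup (fun n : ℕ =>
    ⨆ k : ℤ, (μ (img f k W) / μ (img f (k + (n : ℤ)) W)) ^ (1 / (n : ℝ))) atTop < 1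

/-- condition 𝓗𝓓. -/
def CondHD (μ : Measure X) (f : Equiv.Perm X) (W : Set X) : Prop :=
  1 < liminf (fun n : ℕ =>
    ⨅ k : ℤ, (μ (img f k W) / μ (img f (k + (n : ℤ)) W)) ^ (1 / (n : ℝ))) atTop

/-- condition 𝓖𝓗. -/
def CondGH (μ : Measure X) (f : Equiv.Perm X) (W : Set X) : Prop :=
  limsup (fun n : ℕ =>
      ⨆ m : ℕ, (μ (img f (-(m : ℤ) - (n : ℤ)) W) / μ (img f (-(m : ℤ)) W)) ^ (1 / (n : ℝ)))
      atTop < 1 ∧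
  1 < liminf (fun n : ℕ =>
      ⨅ m : ℕ, (μ (img f (m : ℤ) W) / μ (img f ((m : ℤ) + (n : ℤ)) W)) ^ (1 / (n : ℝ))) atTop

/-- `T` represents the composition operator `φ ↦ φ ∘ f` on `L^p(X,μ)`. -/
def RepsComp (μ : Measure X) (p : ℝ≥0∞) [Fact (1 ≤ p)] (f : X → X)
    (T : Lp ℝ p μ ≃L[ℝ] Lp ℝ p μ) : Prop :=
  ∀ φ : Lp ℝ p μ, ⇑(T φ) =ᵐ[μ] fun x => (φ : X → ℝ) (f x)

end GHShadow

/-!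
On a piece `f^k W`, bounded distortion says that `f^n` multiplies measures by
`μ(f^{k+n} W) / μ(f^k W)` up to a factor `K²`. Condition 𝓗𝓓 bounds this ratio by `b⁻ⁿ` for some
`b > 1`, uniformly in `k` once `n` is large; summing over the pieces gives
`μ(fⁿ B) ≤ K² b⁻ⁿ μ(B)`. Since `T_f⁻ⁿ φ = φ ∘ f⁻ⁿ`, this yields `‖T_f⁻ⁿ‖ ≤ (K² b⁻ⁿ)^{1/p} < 1` for
large `n`. Finally, for an invertible operator `A` the sequence `log ‖Aⁿ‖` is subadditive and
bounded below by `-n log ‖A⁻¹‖`, so by Fekete's lemma `‖Aⁿ‖^{1/n}` converges, and one power of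
norm `< 1` puts the limit below `1`.
-/

section NormedRing

variable {R : Type*} [NormedRing R]

theorem IsUnit.subadditive_log_norm_pow [Nontrivial R] {a : R} (ha : IsUnit a) :
    Subadditive fun n => Real.log ‖a ^ n‖ := by
  intro m n
  have hpos : ∀ k, 0 < ‖a ^ k‖ := fun k => norm_pos_iff.2 (ha.pow k).ne_zero
  calc Real.log ‖a ^ (m + n)‖ ≤ Real.log (‖a ^ m‖ * ‖a ^ n‖) :=
        Real.log_le_log (hpos _) (pow_add a m n ▸ norm_mul_le _ _)
    _ = Real.log ‖a ^ m‖ + Real.log ‖a ^ n‖ := Real.log_mul (hpos m).ne' (hpos n).ne'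

theorem IsUnit.bddBelow_log_norm_pow_div [Nontrivial R] {a : R} (ha : IsUnit a) :
    BddBelow (range fun n : ℕ => Real.log ‖a ^ n‖ / n) := by
  obtain ⟨u, rfl⟩ := ha
  have hpos : ∀ b : Rˣ, 0 < ‖(b : R)‖ := fun b => norm_pos_iff.2 b.ne_zero
  refine ⟨min 0 (-Real.log ‖((u⁻¹ : Rˣ) : R)‖), ?_⟩
  rintro _ ⟨n, rfl⟩
  rcases Nat.eq_zero_or_pos n with rfl | hn
  · simp
  have hinv : 1 ≤ ‖((u⁻¹ : Rˣ) : R)‖ ^ n * ‖(u : R) ^ n‖ :=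
    calc 1 ≤ ‖(1 : R)‖ := one_le_norm_one R
      _ = ‖((u⁻¹ : Rˣ) : R) ^ n * (u : R) ^ n‖ := by
        rw [← Units.val_pow_eq_pow_val, ← Units.val_pow_eq_pow_val, ← Units.val_mul, inv_pow,
          inv_mul_cancel, Units.val_one]
      _ ≤ ‖((u⁻¹ : Rˣ) : R)‖ ^ n * ‖(u : R) ^ n‖ := by
        grw [norm_mul_le, norm_pow_le' _ hn]
  have hlog := Real.log_nonneg hinv
  rw [Real.log_mul (pow_pos (hpos _) n).ne' (by simpa using (hpos (u ^ n)).ne'), Real.log_pow]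
    at hlog
  refine (min_le_right _ _).trans ?_
  rw [le_div_iff₀ (by exact_mod_cast hn)]
  linarith

theorem IsUnit.exists_tendsto_norm_pow_one_div_lt_one {a : R} (ha : IsUnit a) {n₀ : ℕ}
    (hn₀ : n₀ ≠ 0) (h : ‖a ^ n₀‖ < 1) :
    ∃ r < 1, Tendsto (fun n : ℕ => ‖a ^ n‖ ^ (1 / (n : ℝ))) atTop (𝓝 r) := by
  rcases subsingleton_or_nontrivial R with hR | hR
  · refine ⟨0, zero_lt_one, tendsto_const_nhds.congr' ?_⟩
    filter_upwards [eventually_ne_atTop 0] with n hn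
    rw [Subsingleton.elim (a ^ n) 0, norm_zero, Real.zero_rpow (by positivity)]
  have hpos : ∀ n, 0 < ‖a ^ n‖ := fun n => norm_pos_iff.2 (ha.pow n).ne_zero
  have hsub := ha.subadditive_log_norm_pow
  have hlim : hsub.lim < 0 :=
    (hsub.lim_le_div ha.bddBelow_log_norm_pow_div hn₀).trans_lt
      (div_neg_of_neg_of_pos (Real.log_neg (hpos n₀) h) (by positivity))
  refine ⟨Real.exp hsub.lim, Real.exp_lt_one_iff.2 hlim, ?_⟩
  refine ((Real.continuous_exp.tendsto _).comp
    (hsub.tendsto_lim ha.bddBelow_log_norm_pow_div)).congr fun n => ?_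
  rw [Real.rpow_def_of_pos (hpos n), comp_apply, div_eq_mul_one_div]

end NormedRing

section CompositionOperators

variable {α β E : Type*} [MeasurableSpace α] [MeasurableSpace β] {μ : Measure α} {ν : Measure β}
  [NormedAddCommGroup E] {p : ℝ≥0∞}

theorem Equiv.Perm.measurable_zpow {f : Equiv.Perm α} (hf : Measurable f)
    (hf' : Measurable f.symm) (k : ℤ) : Measurable ⇑(f ^ k) := by
  obtain ⟨n, rfl | rfl⟩ := k.eq_nat_or_neg
  · rw [zpow_natCast, Equiv.Perm.coe_pow]
    exact hf.iterate n
  · rw [zpow_neg, zpow_natCast, ← inv_pow, Equiv.Perm.coe_pow]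
    exact hf'.iterate n

theorem Measure.map_le_smul_iff {g : α → β} (hg : Measurable g) {c : ℝ≥0∞} :
    μ.map g ≤ c • ν ↔ ∀ s, MeasurableSet s → μ (g ⁻¹' s) ≤ c * ν s := by
  simp only [Measure.le_iff, Measure.smul_apply, smul_eq_mul]
  exact forall₂_congr fun s hs => by rw [Measure.map_apply hg hs]

theorem eLpNorm_comp_le_of_map_le_smul {g : α → β} (hg : Measurable g) {c : ℝ≥0∞}
    (hc : μ.map g ≤ c • ν) (hp : p ≠ ⊤) {ψ : β → E} (hψ : AEStronglyMeasurable ψ ν) :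
    eLpNorm (ψ ∘ g) p μ ≤ c ^ (1 / p).toReal * eLpNorm ψ p ν :=
  calc eLpNorm (ψ ∘ g) p μ = eLpNorm ψ p (μ.map g) :=
        (eLpNorm_map_measure (hψ.mono_ac (Measure.absolutelyContinuous_of_le_smul hc))
          hg.aemeasurable).symm
    _ ≤ eLpNorm ψ p (c • ν) := eLpNorm_mono_measure _ hc
    _ = c ^ (1 / p).toReal * eLpNorm ψ p ν := by
        rw [eLpNorm_smul_measure_of_ne_top hp, smul_eq_mul]

theorem measure_image_le_of_forall_subset {ι : Type*} [Countable ι] {A : ι → Set α}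
    (hA : ∀ i, MeasurableSet (A i)) (hAd : Pairwise (Disjoint on A)) (hAu : ⋃ i, A i = univ)
    {g : α → β} {c : ℝ≥0∞}
    (h : ∀ i B, MeasurableSet B → B ⊆ A i → ν (g '' B) ≤ c * μ B) {B : Set α}
    (hB : MeasurableSet B) : ν (g '' B) ≤ c * μ B := by
  have hB_eq : B = ⋃ i, B ∩ A i := by rw [← inter_iUnion, hAu, inter_univ]
  have hdisj : Pairwise (Disjoint on fun i => B ∩ A i) := fun i j hij =>
    (hAd hij).mono inter_subset_right inter_subset_right
  calc ν (g '' B) = ν (⋃ i, g '' (B ∩ A i)) := by rw [← image_iUnion, ← hB_eq]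
    _ ≤ ∑' i, ν (g '' (B ∩ A i)) := measure_iUnion_le _
    _ ≤ ∑' i, c * μ (B ∩ A i) :=
        ENNReal.tsum_le_tsum fun i => h i _ (hB.inter (hA i)) inter_subset_right
    _ = c * μ B := by
        rw [ENNReal.tsum_mul_left, ← measure_iUnion hdisj fun i => hB.inter (hA i), ← hB_eq]

variable [NormedSpace ℝ E] [Fact (1 ≤ p)]

theorem Lp.norm_le_of_coeFn_ae_eq_comp (hp : p ≠ ⊤) {A : Lp E p ν →L[ℝ] Lp E p μ} {g : α → β}
    (hg : Measurable g) {c : ℝ≥0∞} (hc : μ.map g ≤ c • ν) (hct : c ≠ ⊤)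
    (hA : ∀ ψ, A ψ =ᵐ[μ] ψ ∘ g) : ‖A‖ ≤ c.toReal ^ (1 / p).toReal := by
  refine ContinuousLinearMap.opNorm_le_bound _ (by positivity) fun ψ => ?_
  rw [Lp.norm_def, Lp.norm_def, ENNReal.toReal_rpow, ← ENNReal.toReal_mul,
    eLpNorm_congr_ae (hA ψ)]
  exact ENNReal.toReal_mono (mul_ne_top (rpow_ne_top_of_nonneg toReal_nonneg hct)
    (Lp.eLpNorm_ne_top ψ)) (eLpNorm_comp_le_of_map_le_smul hg hc hp (Lp.aestronglyMeasurable ψ))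

theorem Lp.coeFn_pow_ae_eq_comp_iterate {A : Lp E p μ →L[ℝ] Lp E p μ} {g : α → α}
    (hg : Measure.QuasiMeasurePreserving g μ μ) (hA : ∀ ψ, A ψ =ᵐ[μ] ψ ∘ g) (n : ℕ)
    (ψ : Lp E p μ) : (A ^ n) ψ =ᵐ[μ] ψ ∘ g^[n] := by
  induction n generalizing ψ with
  | zero => rfl
  | succ n ih =>
    rw [pow_succ, mul_apply_eq_comp, iterate_succ', ← comp_assoc]
    exact (ih (A ψ)).trans ((hg.iterate n).ae_eq (hA ψ))

theorem Lp.coeFn_symm_ae_eq_comp_symm {T : Lp E p μ ≃L[ℝ] Lp E p μ} {f : α ≃ α}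
    (hf : Measure.QuasiMeasurePreserving f.symm μ μ) (hT : ∀ φ, T φ =ᵐ[μ] φ ∘ f)
    (ψ : Lp E p μ) : T.symm ψ =ᵐ[μ] ψ ∘ f.symm := by
  have h := hf.ae_eq (hT (T.symm ψ))
  rw [T.apply_symm_apply, comp_assoc, Equiv.self_comp_symm, comp_id] at h
  exact h.symm

end CompositionOperators

namespace GHShadow

variable {X : Type*} {f : Equiv.Perm X}

theorem img_add (f : Equiv.Perm X) (k l : ℤ) (B : Set X) :
    img f (k + l) B = img f k (img f l B) := by
  rw [img, img, img, ← image_comp, zpow_add, Equiv.Perm.coe_mul]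

theorem img_zero (f : Equiv.Perm X) (B : Set X) : img f 0 B = B := by
  simp [img]

theorem preimage_iterate_symm (f : Equiv.Perm X) (n : ℕ) (B : Set X) :
    (⇑f.symm)^[n] ⁻¹' B = img f n B := by
  rw [img, zpow_natCast, Equiv.image_eq_preimage_symm, ← Equiv.Perm.inv_def (f ^ n), ← inv_pow,
    Equiv.Perm.coe_pow]
  rfl

variable [MeasurableSpace X] {μ : Measure X} {W : Set X}

theorem CondStar.quasiMeasurePreserving {g : X → X} (hg : Measurable g) (h : CondStar μ g) :
    Measure.QuasiMeasurePreserving g μ μ := by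
  obtain ⟨c, -, -, hc⟩ := h
  exact ⟨hg, Measure.absolutelyContinuous_of_le_smul ((Measure.map_le_smul_iff hg).2 hc)⟩

theorem IsDissipative.measurableSet_img (hdiss : IsDissipative μ f W) {B : Set X}
    (hB : MeasurableSet B) (k : ℤ) : MeasurableSet (img f k B) := by
  rw [img, Equiv.image_eq_preimage_symm, ← Equiv.Perm.inv_def, ← zpow_neg]
  exact Equiv.Perm.measurable_zpow hdiss.meas_f hdiss.meas_symm (-k) hB

theorem BoundedDistortion.measure_img_add_le {K : ℝ≥0∞} (hbd : BoundedDistortion μ f W K)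
    (hK0 : K ≠ 0) (hK : K ≠ ⊤) (hW0 : μ W ≠ 0) (hW : μ W ≠ ⊤) {k n : ℤ} {C : ℝ≥0∞}
    (hC : μ (img f (k + n) W) ≤ C * μ (img f k W)) {B : Set X} (hB : MeasurableSet B)
    (hBW : B ⊆ W) : μ (img f (k + n) B) ≤ K ^ 2 * C * μ (img f k B) := by
  have hlow : μ (img f k W) * μ B ≤ K * (μ (img f k B) * μ W) := by
    have h := mul_le_mul_right (hbd k B hB hBW).1 K
    rwa [← mul_assoc, one_div, ENNReal.mul_inv_cancel hK0 hK, one_mul] at h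
  refine (ENNReal.mul_le_mul_iff_left hW0 hW).1 ?_
  calc μ (img f (k + n) B) * μ W ≤ K * (μ (img f (k + n) W) * μ B) := (hbd (k + n) B hB hBW).2
    _ ≤ K * (C * μ (img f k W) * μ B) := by grw [hC]
    _ = K * C * (μ (img f k W) * μ B) := by ring
    _ ≤ K * C * (K * (μ (img f k B) * μ W)) := by grw [hlow]
    _ = K ^ 2 * C * μ (img f k B) * μ W := by ring

theorem IsDissipative.measure_img_le {K : ℝ≥0∞} (hdiss : IsDissipative μ f W)
    (hbd : BoundedDistortion μ f W K) (hK0 : K ≠ 0) (hK : K ≠ ⊤) {n : ℤ} {C : ℝ≥0∞}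
    (hC : ∀ k, μ (img f (k + n) W) ≤ C * μ (img f k W)) {B : Set X} (hB : MeasurableSet B) :
    μ (img f n B) ≤ K ^ 2 * C * μ B := by
  refine measure_image_le_of_forall_subset (hdiss.measurableSet_img hdiss.meas_W) hdiss.disj
    hdiss.cover (fun k B hB hBk => ?_) hB
  have hB' : img f k (img f (-k) B) = B := by rw [← img_add, add_neg_cancel, img_zero]
  have hB'W : img f (-k) B ⊆ img f (-k) (img f k W) := image_mono hBk
  rw [← img_add, neg_add_cancel, img_zero] at hB'W
  have h := hbd.measure_img_add_le hK0 hK hdiss.pos.ne' hdiss.fin.ne (hC k)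
    (hdiss.measurableSet_img hB (-k)) hB'W
  rwa [add_comm, img_add, hB'] at h

theorem CondHD.exists_eventually_pow_mul_le (hHD : CondHD μ f W) :
    ∃ b : ℝ≥0∞, 1 < b ∧ b ≠ ⊤ ∧
      ∀ᶠ n : ℕ in atTop, ∀ k : ℤ, b ^ n * μ (img f (k + n) W) ≤ μ (img f k W) := by
  obtain ⟨b, hb1, hb⟩ := exists_between (lt_min one_lt_two hHD)
  refine ⟨b, hb1, (hb.trans_le (min_le_left _ _)).ne_top, ?_⟩
  filter_upwards [eventually_lt_of_lt_liminf (hb.trans_le (min_le_right _ _)),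
    eventually_ne_atTop 0] with n hn hn0 k
  refine ENNReal.mul_le_of_le_div ?_
  have h := hn.le.trans (iInf_le _ k)
  rwa [one_div, ENNReal.le_rpow_inv_iff (by positivity), ENNReal.rpow_natCast] at h

theorem CondHD.eventually_map_iterate_symm_le_smul {K : ℝ≥0∞} (hHD : CondHD μ f W)
    (hdiss : IsDissipative μ f W) (hbd : BoundedDistortion μ f W K) (hK0 : K ≠ 0) (hK : K ≠ ⊤)
    {ε : ℝ≥0∞} (hε : ε ≠ 0) : ∀ᶠ n : ℕ in atTop, μ.map (⇑f.symm)^[n] ≤ ε • μ := by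
  obtain ⟨b, hb1, hbt, hev⟩ := hHD.exists_eventually_pow_mul_le
  have hlim : Tendsto (fun n : ℕ => K ^ 2 * b⁻¹ ^ n) atTop (𝓝 0) := by
    simpa using ENNReal.Tendsto.const_mul
      (ENNReal.tendsto_pow_atTop_nhds_zero_of_lt_one (ENNReal.inv_lt_one.2 hb1))
      (Or.inr (pow_ne_top hK))
  filter_upwards [hev, hlim.eventually (gt_mem_nhds (pos_iff_ne_zero.2 hε))] with n hn hnε
  refine (Measure.map_le_smul_iff (hdiss.meas_symm.iterate n)).2 fun B hB => ?_
  rw [preimage_iterate_symm]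
  refine (hdiss.measure_img_le hbd hK0 hK (fun k => ?_) hB).trans (by grw [hnε])
  rw [← ENNReal.inv_pow, ← ENNReal.mul_le_iff_le_inv (pow_ne_zero _ (zero_lt_one.trans hb1).ne')
    (pow_ne_top hbt)]
  exact hn k

theorem dilation_of_condHD_general
    {X : Type*} [MeasurableSpace X] (μ : Measure X) (f : Equiv.Perm X) (W : Set X)
    (p : ℝ≥0∞) [Fact (1 ≤ p)] (hp : p ≠ ⊤)
    (hdiss : IsDissipative μ f W)
    (K : ℝ≥0∞) (hK0 : 0 < K) (hKfin : K ≠ ⊤)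
    (hbd : BoundedDistortion μ f W K)
    (hstar' : CondStar μ f.symm)
    (T : Lp ℝ p μ ≃L[ℝ] Lp ℝ p μ) (hT : RepsComp μ p f T)
    (hHD : CondHD μ f W) :
    SpectralRadiusLtOne (T.symm : Lp ℝ p μ →L[ℝ] Lp ℝ p μ) := by
  set A : Lp ℝ p μ →L[ℝ] Lp ℝ p μ := (T.symm : Lp ℝ p μ →L[ℝ] Lp ℝ p μ)
  have hqmp := hstar'.quasiMeasurePreserving hdiss.meas_symm
  have hA : ∀ n ψ, (A ^ n) ψ =ᵐ[μ] ψ ∘ (⇑f.symm)^[n] :=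
    Lp.coeFn_pow_ae_eq_comp_iterate hqmp (Lp.coeFn_symm_ae_eq_comp_symm hqmp hT)
  have hnorm : ∀ᶠ n in atTop, ‖A ^ n‖ < 1 := by
    filter_upwards [hHD.eventually_map_iterate_symm_le_smul hdiss hbd hK0.ne' hKfin
      (ε := 2⁻¹) (by simp)] with n hn
    refine (Lp.norm_le_of_coeFn_ae_eq_comp hp (hdiss.meas_symm.iterate n) hn (by simp)
      (hA n)).trans_lt (Real.rpow_lt_one (by positivity) (by norm_num) ?_)
    exact ENNReal.toReal_pos (by simpa using hp)
      (by simpa using (zero_lt_one.trans_le (Fact.out : 1 ≤ p)).ne')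
  obtain ⟨n, hn, hn0⟩ := (hnorm.and (eventually_ne_atTop 0)).exists
  exact IsUnit.exists_tendsto_norm_pow_one_div_lt_one ⟨T.symm.toUnit, rfl⟩ hn0 hn

/-- Theorem SS, part 2: if condition 𝓗𝓓 holds, then the composition
operator `T_f` on `L^p(X,μ)` is a dilation, i.e. its inverse `T_f⁻¹ = T_{f⁻¹}` has
spectral radius `< 1`. -/
theorem dilation_of_condHD
    {X : Type*} [MeasurableSpace X] (μ : Measure X) (f : Equiv.Perm X) (W : Set X)
    (p : ℝ≥0∞) [Fact (1 ≤ p)] (hp : p ≠ ⊤)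
    (hdiss : IsDissipative μ f W)
    (K : ℝ≥0∞) (hK0 : 0 < K) (hKfin : K ≠ ⊤)
    (hbd : BoundedDistortion μ f W K)
    (hstar : CondStar μ f) (hstar' : CondStar μ f.symm)
    (T : Lp ℝ p μ ≃L[ℝ] Lp ℝ p μ) (hT : RepsComp μ p f T)
    (hHD : CondHD μ f W) :
    SpectralRadiusLtOne (T.symm : Lp ℝ p μ →L[ℝ] Lp ℝ p μ) :=
  dilation_of_condHD_general μ f W p hp hdiss K hK0 hKfin hbd hstar' T hT hHD

end GHShadow
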